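/- For every positive integer N divisible by d > 1, the probability that a uniform random permutation of [N] has all cycle lengths divisible by d equals (1/(N/d)!) · ∏_{r=0}^{N/d - 1} (r + 1/d). -/

import Mathlib

/-!
Inserting the point `0` into a permutation `e` of `Fin n` (`Equiv.Perm.decomposeFin`) makes it
either a fixed point or the predecessor of some `w`; in the latter case the cycle of `w` grows by
one and all other cycles are unchanged. Let `a n` count the permutations of `Fin n` with all cycle
lengths divisible by `d`, and `b j n` those of `Fin (n + 1)` whose cycle through `0` has length
`≡ -j [MOD d]` while all other cycle lengths are divisible by `d`. Insertion gives
`b j (n + 1) = [d ∣ j + 1] a (n + 1) + (n + 1) b (j + 1) n`, and running this `d` times,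
`a (n + d) = (n + 1) · (n + 1) (n + 2) ⋯ (n + d - 1) · a n`, i.e.
`a (n + d) / (n + d)! = a n / n! · (n + 1) / (n + d)`. Telescoping over `n = 0, d, 2d, …` yields
`∏ r < m, (r d + 1) / (r d + d) = (1 / m!) ∏ r < m, (r + 1 / d)`.
-/

open Nat Function Finset

theorem Function.Injective.minimalPeriod_map_eq {α β : Type*} {f : α → α} {g : β → β}
    {π : α → β} (hπ : Injective π) {x : α} (h : ∀ n, g^[n] (π x) = π (f^[n] x)) :
    minimalPeriod g (π x) = minimalPeriod f x := by
  rw [minimalPeriod_eq_minimalPeriod_iff]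
  intro n
  rw [IsPeriodicPt, IsPeriodicPt, IsFixedPt, IsFixedPt, h, hπ.eq_iff]

namespace Equiv.Perm

section minimalPeriod

variable {α : Type*} {σ : Perm α} {x y : α}

theorem minimalPeriod_pos [Finite α] (σ : Perm α) (x : α) : 0 < minimalPeriod σ x :=
  minimalPeriod_pos_of_mem_periodicPts (σ.injective.mem_periodicPts x)

theorem SameCycle.exists_pow_eq_of_lt_minimalPeriod [Finite α] (h : σ.SameCycle x y) :
    ∃ k < minimalPeriod σ x, (σ ^ k) x = y := by
  obtain ⟨k, rfl⟩ := h.exists_nat_pow_eq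
  refine ⟨k % minimalPeriod σ x, Nat.mod_lt _ (minimalPeriod_pos σ x), ?_⟩
  rw [← iterate_eq_pow, ← iterate_eq_pow, iterate_mod_minimalPeriod_eq]

theorem SameCycle.minimalPeriod_eq [Finite α] (h : σ.SameCycle x y) :
    minimalPeriod σ x = minimalPeriod σ y := by
  obtain ⟨k, rfl⟩ := h.exists_nat_pow_eq
  rw [← iterate_eq_pow, minimalPeriod_apply_iterate (σ.injective.mem_periodicPts x)]

theorem minimalPeriod_conj (g σ : Perm α) (x : α) :
    minimalPeriod ⇑(g * σ * g⁻¹) (g x) = minimalPeriod σ x :=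
  g.injective.minimalPeriod_map_eq fun n => by
    rw [iterate_eq_pow, iterate_eq_pow, conj_pow]
    simp

end minimalPeriod

section decomposeFin

variable {n : ℕ} (e : Perm (Fin n))

theorem decomposeFin_symm_pow_apply_succ (p : Fin (n + 1)) (x : Fin n) (k : ℕ)
    (h : ∀ j < k, ((e ^ (j + 1)) x).succ ≠ p) :
    (decomposeFin.symm (p, e) ^ k) x.succ = ((e ^ k) x).succ := by
  induction k with
  | zero => rfl
  | succ k ih =>
    have hk := h k k.lt_succ_self
    rw [_root_.pow_succ', mul_apply] at hk
    rw [_root_.pow_succ', mul_apply, ih fun j hj => h j (by omega), decomposeFin_symm_apply_succ,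
      swap_apply_of_ne_of_ne (Fin.succ_ne_zero _) hk, _root_.pow_succ', mul_apply]

theorem minimalPeriod_decomposeFin_symm_apply_succ (p : Fin (n + 1)) (x : Fin n)
    (h : ∀ j, ((e ^ j) x).succ ≠ p) :
    minimalPeriod (decomposeFin.symm (p, e)) x.succ = minimalPeriod e x :=
  (Fin.succ_injective n).minimalPeriod_map_eq fun k => by
    rw [iterate_eq_pow, iterate_eq_pow,
      decomposeFin_symm_pow_apply_succ e p x k fun j _ => h (j + 1)]

theorem minimalPeriod_decomposeFin_symm_zero_apply_zero :
    minimalPeriod (decomposeFin.symm (0, e)) 0 = 1 :=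
  minimalPeriod_eq_one_iff_isFixedPt.mpr (decomposeFin_symm_apply_zero 0 e)

theorem not_sameCycle_decomposeFin_symm_zero (x : Fin n) :
    ¬(decomposeFin.symm (0, e)).SameCycle 0 x.succ := fun h =>
  Fin.succ_ne_zero x (h.eq_of_left (decomposeFin_symm_apply_zero 0 e)).symm

theorem decomposeFin_symm_pow_succ_apply_zero (w : Fin n) {k : ℕ}
    (hk : k < minimalPeriod e w) :
    (decomposeFin.symm (w.succ, e) ^ (k + 1)) 0 = ((e ^ k) w).succ := by
  rw [_root_.pow_succ, mul_apply, decomposeFin_symm_apply_zero, decomposeFin_symm_pow_apply_succ]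
  intro j hj hjw
  refine not_isPeriodicPt_of_pos_of_lt_minimalPeriod (f := e) (x := w) j.succ_ne_zero (by omega) ?_
  rw [IsPeriodicPt, IsFixedPt, iterate_eq_pow]
  exact Fin.succ_injective n hjw

theorem minimalPeriod_decomposeFin_symm_succ_apply_zero (w : Fin n) :
    minimalPeriod (decomposeFin.symm (w.succ, e)) 0 = minimalPeriod e w + 1 := by
  set σ := decomposeFin.symm (w.succ, e)
  obtain ⟨m, hm⟩ := Nat.exists_eq_add_one_of_ne_zero (minimalPeriod_pos e w).ne'
  have hper : IsPeriodicPt σ (m + 2) 0 := by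
    rw [IsPeriodicPt, IsFixedPt, iterate_eq_pow, _root_.pow_succ', mul_apply,
      decomposeFin_symm_pow_succ_apply_zero e w (by omega), decomposeFin_symm_apply_succ,
      ← mul_apply, ← _root_.pow_succ', ← hm, ← iterate_eq_pow, iterate_minimalPeriod,
      swap_apply_right]
  refine le_antisymm (hm ▸ hper.minimalPeriod_le (by omega)) (not_lt.mp fun hlt => ?_)
  obtain ⟨k, hk⟩ := Nat.exists_eq_add_one_of_ne_zero (minimalPeriod_pos σ 0).ne'
  have hσk := isPeriodicPt_minimalPeriod σ 0
  rw [hk, IsPeriodicPt, IsFixedPt, iterate_eq_pow,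
    decomposeFin_symm_pow_succ_apply_zero e w (by omega)] at hσk
  exact Fin.succ_ne_zero _ hσk

theorem sameCycle_decomposeFin_symm_succ_zero_succ (w x : Fin n) :
    (decomposeFin.symm (w.succ, e)).SameCycle 0 x.succ ↔ e.SameCycle w x := by
  constructor
  · intro h
    obtain ⟨k, hk, hkx⟩ := h.exists_pow_eq_of_lt_minimalPeriod
    rw [minimalPeriod_decomposeFin_symm_succ_apply_zero] at hk
    cases k with
    | zero => exact absurd hkx (Fin.succ_ne_zero x).symm
    | succ k =>
      rw [decomposeFin_symm_pow_succ_apply_zero e w (by omega)] at hkx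
      exact ⟨k, by simpa using Fin.succ_injective n hkx⟩
  · intro h
    obtain ⟨k, hk, rfl⟩ := h.exists_pow_eq_of_lt_minimalPeriod
    exact ⟨((k + 1 : ℕ) : ℤ), by
      rw [zpow_natCast, decomposeFin_symm_pow_succ_apply_zero e w hk]⟩

end decomposeFin

section count

variable {α : Type*}

/-- `j` counts the points still to be inserted into the cycle through `t`. -/
def CycleLengthsDvdExcept (d j : ℕ) (t : α) (σ : Perm α) : Prop :=
  d ∣ minimalPeriod σ t + j ∧ ∀ x, ¬σ.SameCycle t x → d ∣ minimalPeriod σ x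

theorem cycleLengthsDvdExcept_add_self_iff {d j : ℕ} {t : α} {σ : Perm α} :
    CycleLengthsDvdExcept d (j + d) t σ ↔ CycleLengthsDvdExcept d j t σ := by
  rw [CycleLengthsDvdExcept, CycleLengthsDvdExcept, ← add_assoc, Nat.dvd_add_self_right]

theorem cycleLengthsDvdExcept_zero_iff [Finite α] {d : ℕ} {t : α} {σ : Perm α} :
    CycleLengthsDvdExcept d 0 t σ ↔ ∀ x, d ∣ minimalPeriod σ x := by
  refine ⟨fun ⟨ht, h⟩ x => ?_, fun h => ⟨h t, fun x _ => h x⟩⟩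
  by_cases hx : σ.SameCycle t x
  · exact hx.minimalPeriod_eq ▸ ht
  · exact h x hx

theorem cycleLengthsDvdExcept_conj_iff {d j : ℕ} {t : α} (g σ : Perm α) :
    CycleLengthsDvdExcept d j (g t) (g * σ * g⁻¹) ↔ CycleLengthsDvdExcept d j t σ := by
  refine and_congr (by rw [minimalPeriod_conj]) ⟨fun h x hx => ?_, fun h x hx => ?_⟩
  · rw [← minimalPeriod_conj g]
    exact h (g x) (by rwa [sameCycle_conj, coe_inv, symm_apply_apply, symm_apply_apply])
  · obtain ⟨y, rfl⟩ := g.surjective x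
    rw [minimalPeriod_conj]
    exact h y (by rwa [sameCycle_conj, coe_inv, symm_apply_apply, symm_apply_apply] at hx)

theorem card_cycleLengthsDvdExcept_eq (d j : ℕ) (t : α) (g : Perm α) :
    Nat.card {σ : Perm α // CycleLengthsDvdExcept d j (g t) σ} =
      Nat.card {σ : Perm α // CycleLengthsDvdExcept d j t σ} :=
  Nat.card_congr (((MulAut.conj g).toEquiv.subtypeEquiv fun σ =>
    (cycleLengthsDvdExcept_conj_iff g σ).symm).symm)

theorem cycleLengthsDvdExcept_decomposeFin_symm_zero_iff {d j n : ℕ} (e : Perm (Fin n)) :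
    CycleLengthsDvdExcept d j 0 (decomposeFin.symm (0, e)) ↔
      d ∣ j + 1 ∧ ∀ x, d ∣ minimalPeriod e x := by
  rw [CycleLengthsDvdExcept, minimalPeriod_decomposeFin_symm_zero_apply_zero, add_comm 1 j]
  refine and_congr_right' ⟨fun h x => ?_, fun h => Fin.cases (fun h0 => ?_) fun x _ => ?_⟩
  · rw [← minimalPeriod_decomposeFin_symm_apply_succ e 0 x fun _ => Fin.succ_ne_zero _]
    exact h x.succ (not_sameCycle_decomposeFin_symm_zero e x)
  · exact absurd (SameCycle.refl _ _) h0
  · rw [minimalPeriod_decomposeFin_symm_apply_succ e 0 x fun _ => Fin.succ_ne_zero _]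
    exact h x

theorem cycleLengthsDvdExcept_decomposeFin_symm_succ_iff {d j n : ℕ} (w : Fin n)
    (e : Perm (Fin n)) :
    CycleLengthsDvdExcept d j 0 (decomposeFin.symm (w.succ, e)) ↔
      CycleLengthsDvdExcept d (j + 1) w e := by
  have hperiod (x : Fin n) (hx : ¬e.SameCycle w x) :
      minimalPeriod (decomposeFin.symm (w.succ, e)) x.succ = minimalPeriod e x :=
    minimalPeriod_decomposeFin_symm_apply_succ e _ x fun k hk =>
      hx ⟨-k, by
        rw [← Fin.succ_injective n hk, zpow_neg, zpow_natCast, coe_inv, symm_apply_apply]⟩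
  rw [CycleLengthsDvdExcept, CycleLengthsDvdExcept,
    minimalPeriod_decomposeFin_symm_succ_apply_zero, add_right_comm, add_assoc]
  refine and_congr_right' ⟨fun h x hx => ?_, fun h => Fin.cases (fun h0 => ?_) fun x hx => ?_⟩
  · rw [← hperiod x hx]
    exact h x.succ (by rwa [sameCycle_decomposeFin_symm_succ_zero_succ])
  · exact absurd (SameCycle.refl _ _) h0
  · rw [sameCycle_decomposeFin_symm_succ_zero_succ] at hx
    rw [hperiod x hx]
    exact h x hx

theorem card_subtype_perm_fin_succ {n : ℕ} (P : Perm (Fin (n + 1)) → Prop) :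
    Nat.card {σ // P σ} =
      ∑ p, Nat.card {e : Perm (Fin n) // P (decomposeFin.symm (p, e))} := by
  rw [← Nat.card_sigma]
  exact Nat.card_congr ((decomposeFin.subtypeEquiv fun σ => by simp).trans
    (subtypeProdEquivSigmaSubtype fun p e => P (decomposeFin.symm (p, e))))

end count

end Equiv.Perm

open Equiv Perm

noncomputable def numCycleLengthsDvd (d n : ℕ) : ℕ :=
  Nat.card {σ : Perm (Fin n) // ∀ x, d ∣ minimalPeriod σ x}

noncomputable def numCycleLengthsDvdExcept (d j n : ℕ) : ℕ :=
  Nat.card {σ : Perm (Fin (n + 1)) // CycleLengthsDvdExcept d j 0 σ}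

theorem numCycleLengthsDvd_zero (d : ℕ) : numCycleLengthsDvd d 0 = 1 := by
  rw [numCycleLengthsDvd, Nat.card_eq_one_iff_unique]
  exact ⟨inferInstance, ⟨⟨1, finZeroElim⟩⟩⟩

theorem numCycleLengthsDvdExcept_zero (d n : ℕ) :
    numCycleLengthsDvdExcept d 0 n = numCycleLengthsDvd d (n + 1) :=
  Nat.card_congr (Equiv.subtypeEquivRight fun _ => cycleLengthsDvdExcept_zero_iff)

theorem numCycleLengthsDvdExcept_add_self (d j n : ℕ) :
    numCycleLengthsDvdExcept d (j + d) n = numCycleLengthsDvdExcept d j n :=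
  Nat.card_congr (Equiv.subtypeEquivRight fun _ => cycleLengthsDvdExcept_add_self_iff)

theorem numCycleLengthsDvdExcept_eq_sum (d j n : ℕ) :
    numCycleLengthsDvdExcept d j n = (if d ∣ j + 1 then numCycleLengthsDvd d n else 0) +
      ∑ w : Fin n, Nat.card {e : Perm (Fin n) // CycleLengthsDvdExcept d (j + 1) w e} := by
  rw [numCycleLengthsDvdExcept, card_subtype_perm_fin_succ, Fin.sum_univ_succ]
  congr 1
  · simp_rw [cycleLengthsDvdExcept_decomposeFin_symm_zero_iff]
    split_ifs with hj
    · simp only [hj, true_and, numCycleLengthsDvd]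
    · simp [hj]
  · simp_rw [cycleLengthsDvdExcept_decomposeFin_symm_succ_iff]

theorem numCycleLengthsDvdExcept_succ (d j n : ℕ) :
    numCycleLengthsDvdExcept d j (n + 1) =
      (if d ∣ j + 1 then numCycleLengthsDvd d (n + 1) else 0) +
        (n + 1) * numCycleLengthsDvdExcept d (j + 1) n := by
  rw [numCycleLengthsDvdExcept_eq_sum]
  congr 1
  have hw (w : Fin (n + 1)) := card_cycleLengthsDvdExcept_eq d (j + 1) 0 (swap 0 w)
  simp only [swap_apply_left] at hw
  simp [hw, numCycleLengthsDvdExcept]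

theorem numCycleLengthsDvdExcept_sub_one {d : ℕ} (hd : 0 < d) (n : ℕ) :
    numCycleLengthsDvdExcept d (d - 1) n = (n + 1) * numCycleLengthsDvd d n := by
  have hdvd : d ∣ d - 1 + 1 := by rw [Nat.sub_add_cancel hd]
  cases n with
  | zero => simp [numCycleLengthsDvdExcept_eq_sum, hdvd]
  | succ n =>
    have hperiodic := numCycleLengthsDvdExcept_add_self d 0 n
    rw [zero_add] at hperiodic
    rw [numCycleLengthsDvdExcept_succ, if_pos hdvd, Nat.sub_add_cancel hd, hperiodic,
      numCycleLengthsDvdExcept_zero]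
    ring

theorem numCycleLengthsDvdExcept_add {d i j : ℕ} (hij : i + j + 1 = d) (n : ℕ) :
    numCycleLengthsDvdExcept d j (n + i) =
      (n + 1).ascFactorial i * ((n + 1) * numCycleLengthsDvd d n) := by
  induction i generalizing j with
  | zero =>
    rw [show j = d - 1 by omega, numCycleLengthsDvdExcept_sub_one (by omega)]
    simp
  | succ i ih =>
    have hj : ¬d ∣ j + 1 := Nat.not_dvd_of_pos_of_lt (by omega) (by omega)
    rw [← add_assoc, numCycleLengthsDvdExcept_succ, if_neg hj, ih (by omega),
      ascFactorial_succ]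
    ring

theorem numCycleLengthsDvd_add {d : ℕ} (hd : 0 < d) (n : ℕ) :
    numCycleLengthsDvd d (n + d) =
      (n + 1).ascFactorial (d - 1) * ((n + 1) * numCycleLengthsDvd d n) := by
  rw [← numCycleLengthsDvdExcept_add (i := d - 1) (j := 0) (by omega),
    numCycleLengthsDvdExcept_zero, add_assoc, Nat.sub_add_cancel hd]

theorem numCycleLengthsDvd_add_div_factorial {d : ℕ} (hd : 0 < d) (n : ℕ) :
    (numCycleLengthsDvd d (n + d) : ℚ) / (n + d)! =
      numCycleLengthsDvd d n / n ! * ((n + 1) / (n + d)) := by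
  obtain ⟨k, rfl⟩ := Nat.exists_eq_add_one_of_ne_zero hd.ne'
  have hfact : (n + (k + 1))! = n ! * ((n + 1 + k) * (n + 1).ascFactorial k) := by
    rw [← ascFactorial_succ, factorial_mul_ascFactorial]
  rw [numCycleLengthsDvd_add hd, hfact, Nat.add_sub_cancel]
  have : ((n + 1).ascFactorial k : ℚ) ≠ 0 := by positivity
  push_cast
  field_simp
  ring

theorem numCycleLengthsDvd_mul_div_factorial {d : ℕ} (hd : 0 < d) (m : ℕ) :
    (numCycleLengthsDvd d (d * m) : ℚ) / (d * m)! =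
      1 / m ! * ∏ r ∈ range m, ((r : ℚ) + 1 / d) := by
  induction m with
  | zero => simp [numCycleLengthsDvd_zero]
  | succ m ih =>
    rw [mul_add_one, numCycleLengthsDvd_add_div_factorial hd, ih, prod_range_succ,
      factorial_succ]
    generalize ∏ r ∈ range m, ((r : ℚ) + 1 / d) = P
    have : (d : ℚ) ≠ 0 := by positivity
    push_cast
    field_simp

theorem prob_all_cycle_lengths_div_general (N d : ℕ) (hd : 1 < d) (hdvd : d ∣ N) :
    (Nat.card {σ : Equiv.Perm (Fin N) //
        ∀ x : Fin N, d ∣ Function.minimalPeriod σ x} : ℚ) / (N ! : ℚ)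
      = (1 / ((N / d)! : ℚ)) * ∏ r ∈ Finset.range (N / d), ((r : ℚ) + 1 / d) := by
  obtain ⟨m, rfl⟩ := hdvd
  rw [Nat.mul_div_cancel_left m (by omega)]
  exact numCycleLengthsDvd_mul_div_factorial (by omega) m

/-- For `d > 1` and `d ∣ N`, the probability that a uniform random permutation of
`[N]` has all cycle lengths divisible by `d` equals
`(1/(N/d)!) · ∏_{r=0}^{N/d-1} (r + 1/d)`. -/
theorem prob_all_cycle_lengths_div (N d : ℕ) (hd : 1 < d) (hN : 0 < N) (hdvd : d ∣ N) :
    (Nat.card {σ : Equiv.Perm (Fin N) //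
        ∀ x : Fin N, d ∣ Function.minimalPeriod σ x} : ℚ) / (N ! : ℚ)
      = (1 / ((N / d)! : ℚ)) * ∏ r ∈ Finset.range (N / d), ((r : ℚ) + 1 / d) :=
  prob_all_cycle_lengths_div_general N d hd hdvd
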